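/- Let a_1, ..., a_n be positive integers and M = Λ_m(a_1)·Λ_m(a_2)···Λ_m(a_n). Let X, Y be vectors with positive entries satisfying x_i/x_{i+1} ≥ y_i/y_{i+1} > 0 for all 1 ≤ i ≤ m, and set X' = MX, Y' = MY. Then for all i: if n is even, x'_i/x'_{i+1} ≥ y'_i/y'_{i+1}, and if n is odd, x'_i/x'_{i+1} ≤ y'_i/y'_{i+1}. -/

import Mathlib

open scoped BigOperators

/-- Generalized binomial coefficient `C(n,k)` for integer `n` and `k`, valued in `ℝ`:
`n(n-1)⋯(n-k+1)/k!` for `k ≥ 0`, and `0` for `k < 0`. -/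
noncomputable def ichooseR (n : ℤ) (k : ℤ) : ℝ :=
  if k < 0 then 0 else (∏ i ∈ Finset.range k.toNat, ((n : ℝ) - i)) / (k.toNat.factorial : ℝ)

/-- Generalized multichoose `⟪n, r⟫ = C(n + r - 1, r)`, valued in `ℝ`. -/
noncomputable def imchooseR (n : ℤ) (r : ℤ) : ℝ := ichooseR (n + r - 1) r

lemma imchooseR_neg {a r : ℤ} (hr : r < 0) : imchooseR a r = 0 := by
  simp [imchooseR, ichooseR, hr]

lemma imchooseR_pos {a : ℤ} (ha : 0 < a) {r : ℤ} (hr : 0 ≤ r) : 0 < imchooseR a r := by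
  rw [imchooseR, ichooseR, if_neg (by omega)]
  apply div_pos
  · apply Finset.prod_pos
    intro i hi
    have h1 : (i : ℤ) < r := by
      have h2 := Finset.mem_range.1 hi
      omega
    have h3 : (0:ℤ) < a + r - 1 - i := by omega
    have h4 : ((0:ℤ):ℝ) < ((a + r - 1 - i : ℤ) : ℝ) := by exact_mod_cast h3
    push_cast at h4 ⊢
    linarith
  · positivity

lemma imchooseR_nonneg {a : ℤ} (ha : 0 < a) (r : ℤ) : 0 ≤ imchooseR a r := by
  rcases lt_or_ge r 0 with h | h
  · rw [imchooseR_neg h]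
  · exact (imchooseR_pos ha h).le

lemma imchooseR_succ (a : ℤ) {r : ℤ} (hr : 0 ≤ r) :
    imchooseR a (r + 1) * ((r : ℝ) + 1) = imchooseR a r * ((a : ℝ) + r) := by
  rw [imchooseR, imchooseR, ichooseR, ichooseR, if_neg (by omega), if_neg (by omega)]
  have h1 : (r + 1).toNat = r.toNat + 1 := by omega
  rw [h1, Finset.prod_range_succ']
  have h3 : ∏ i ∈ Finset.range r.toNat, (((a + (r+1) - 1 : ℤ) : ℝ) - ((i + 1 : ℕ):ℝ))
      = ∏ i ∈ Finset.range r.toNat, (((a + r - 1 : ℤ) : ℝ) - (i:ℝ)) :=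
    Finset.prod_congr rfl fun i _ => by push_cast; ring
  rw [h3, Nat.factorial_succ]
  have h4 : ((a + (r+1) - 1 : ℤ) : ℝ) - (0:ℕ) = (a:ℝ) + r := by push_cast; ring
  have h5 : ((r:ℝ) + 1) = ((r.toNat + 1 : ℕ) : ℝ) := by
    have h : ((r.toNat : ℤ) : ℝ) = (r:ℝ) := by rw [Int.toNat_of_nonneg hr]
    push_cast at h ⊢
    linarith
  have h6 : ((r.toNat.factorial : ℝ)) ≠ 0 := by positivity
  have h7 : ((r.toNat + 1 : ℕ) : ℝ) ≠ 0 := by positivity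
  rw [h4, h5]
  push_cast
  field_simp

lemma imchooseR_logconcave {a : ℤ} (ha : 0 < a) {v u : ℤ} (hvu : v ≤ u) :
    imchooseR a (u + 1) * imchooseR a v ≤ imchooseR a u * imchooseR a (v + 1) := by
  rcases lt_or_ge v 0 with hv | hv
  · rw [imchooseR_neg hv, mul_zero]
    exact mul_nonneg (imchooseR_nonneg ha _) (imchooseR_nonneg ha _)
  · have hu : (0:ℤ) ≤ u := le_trans hv hvu
    have h1 := imchooseR_succ a hu
    have h2 := imchooseR_succ a hv
    have hfu := imchooseR_nonneg ha u
    have hfv := imchooseR_nonneg ha v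
    have hup : (0:ℝ) < (u:ℝ) + 1 := by exact_mod_cast (by omega : (0:ℤ) < u + 1)
    have hvp : (0:ℝ) < (v:ℝ) + 1 := by exact_mod_cast (by omega : (0:ℤ) < v + 1)
    have ha' : (1:ℝ) ≤ (a:ℝ) := by exact_mod_cast ha
    have huv : (v:ℝ) ≤ (u:ℝ) := by exact_mod_cast hvu
    rw [← mul_le_mul_iff_of_pos_right (mul_pos hup hvp)]
    have e1 : imchooseR a (u+1) * imchooseR a v * (((u:ℝ)+1) * ((v:ℝ)+1))
        = (imchooseR a (u+1) * ((u:ℝ)+1)) * (imchooseR a v * ((v:ℝ)+1)) := by ring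
    have e2 : imchooseR a u * imchooseR a (v+1) * (((u:ℝ)+1) * ((v:ℝ)+1))
        = (imchooseR a (v+1) * ((v:ℝ)+1)) * (imchooseR a u * ((u:ℝ)+1)) := by ring
    rw [e1, e2, h1, h2]
    have key : ((a:ℝ) + u) * ((v:ℝ) + 1) ≤ ((a:ℝ) + v) * ((u:ℝ) + 1) := by nlinarith
    nlinarith [mul_nonneg hfu hfv]

/-- The `(m+1)×(m+1)` real matrix `Λ_m(a)` whose (1-indexed) `(i,j)`-entry is
`⟪a, m + 2 - i - j⟫`. -/
noncomputable def LamR (m : ℕ) (a : ℤ) : Matrix (Fin (m+1)) (Fin (m+1)) ℝ :=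
  fun i j => imchooseR a ((m : ℤ) - (i : ℕ) - (j : ℕ))

/-- The product `Λ_m(a₁) ⋯ Λ_m(aₙ)`. -/
noncomputable def CFmatR (m : ℕ) (l : List ℤ) : Matrix (Fin (m+1)) (Fin (m+1)) ℝ :=
  (l.map (LamR m)).prod

lemma lam_mulVec_pos (m : ℕ) {a : ℤ} (ha : 0 < a) {X : Fin (m+1) → ℝ} (hX : ∀ i, 0 < X i) :
    ∀ i, 0 < (LamR m a).mulVec X i := by
  intro i
  simp only [Matrix.mulVec, dotProduct]
  apply Finset.sum_pos'
  · intro j _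
    exact mul_nonneg (imchooseR_nonneg ha _) (hX j).le
  · refine ⟨⟨0, by omega⟩, Finset.mem_univ _, ?_⟩
    apply mul_pos _ (hX _)
    apply imchooseR_pos ha
    have := i.isLt
    simp only [LamR]
    omega

lemma g_nonneg (m : ℕ) {a : ℤ} (ha : 0 < a) (i : Fin m) {j k : Fin (m+1)} (hjk : j ≤ k) :
    0 ≤ LamR m a i.succ j * LamR m a i.castSucc k - LamR m a i.castSucc j * LamR m a i.succ k := by
  have hjk' : (j:ℕ) ≤ (k:ℕ) := hjk
  have h := imchooseR_logconcave ha (v := (m:ℤ) - (i:ℕ) - 1 - (k:ℕ))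
    (u := (m:ℤ) - (i:ℕ) - 1 - (j:ℕ)) (by omega)
  have e1 : LamR m a i.castSucc j = imchooseR a (((m:ℤ) - (i:ℕ) - 1 - (j:ℕ)) + 1) := by
    simp only [LamR, Fin.coe_castSucc]; congr 1; ring
  have e2 : LamR m a i.castSucc k = imchooseR a (((m:ℤ) - (i:ℕ) - 1 - (k:ℕ)) + 1) := by
    simp only [LamR, Fin.coe_castSucc]; congr 1; ring
  have e3 : LamR m a i.succ j = imchooseR a ((m:ℤ) - (i:ℕ) - 1 - (j:ℕ)) := by
    simp only [LamR, Fin.val_succ]; congr 1; push_cast; ring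
  have e4 : LamR m a i.succ k = imchooseR a ((m:ℤ) - (i:ℕ) - 1 - (k:ℕ)) := by
    simp only [LamR, Fin.val_succ]; congr 1; push_cast; ring
  rw [e1, e2, e3, e4]
  linarith

lemma lam_step (m : ℕ) {a : ℤ} (ha : 0 < a) {X Y : Fin (m+1) → ℝ}
    (hXY : ∀ j k : Fin (m+1), j ≤ k → X k * Y j ≤ X j * Y k) (i : Fin m) :
    ((LamR m a).mulVec X) i.castSucc * ((LamR m a).mulVec Y) i.succ ≤
      ((LamR m a).mulVec X) i.succ * ((LamR m a).mulVec Y) i.castSucc := by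
  simp only [Matrix.mulVec, dotProduct]
  rw [Finset.sum_mul_sum, Finset.sum_mul_sum, ← sub_nonneg]
  set E : Fin (m+1) → Fin (m+1) → ℝ := fun j k =>
    (LamR m a i.succ j * X j) * (LamR m a i.castSucc k * Y k) -
      (LamR m a i.castSucc j * X j) * (LamR m a i.succ k * Y k) with hE
  have hEsum : (∑ j, ∑ k, (LamR m a i.succ j * X j) * (LamR m a i.castSucc k * Y k)) -
      (∑ j, ∑ k, (LamR m a i.castSucc j * X j) * (LamR m a i.succ k * Y k)) =
      ∑ j, ∑ k, E j k := by
    rw [← Finset.sum_sub_distrib]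
    exact Finset.sum_congr rfl fun j _ => (Finset.sum_sub_distrib _ _).symm
  rw [hEsum]
  have hpair : ∀ j k, 0 ≤ E j k + E k j := by
    intro j k
    rcases le_total j k with h | h
    · have hg := g_nonneg m ha i h
      have hx := hXY j k h
      have h1 : 0 ≤ (LamR m a i.succ j * LamR m a i.castSucc k -
          LamR m a i.castSucc j * LamR m a i.succ k) * (X j * Y k - X k * Y j) :=
        mul_nonneg hg (by linarith)
      simp only [hE]
      nlinarith [h1]
    · have hg := g_nonneg m ha i h
      have hx := hXY k j h
      have h1 : 0 ≤ (LamR m a i.succ k * LamR m a i.castSucc j -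
          LamR m a i.castSucc k * LamR m a i.succ j) * (X k * Y j - X j * Y k) :=
        mul_nonneg hg (by linarith)
      simp only [hE]
      nlinarith [h1]
  have h2 : (∑ j, ∑ k, E j k) * 2 = ∑ j, ∑ k, (E j k + E k j) := by
    have hadd : (∑ j, ∑ k, (E j k + E k j)) =
        (∑ j, ∑ k, E j k) + (∑ j, ∑ k, E k j) := by
      rw [← Finset.sum_add_distrib]
      exact Finset.sum_congr rfl fun j _ => Finset.sum_add_distrib
    have hc : (∑ j : Fin (m+1), ∑ k : Fin (m+1), E k j) = ∑ j, ∑ k, E j k :=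
      Finset.sum_comm
    rw [hadd, hc]; ring
  have h3 : 0 ≤ ∑ j : Fin (m+1), ∑ k : Fin (m+1), (E j k + E k j) :=
    Finset.sum_nonneg fun j _ => Finset.sum_nonneg fun k _ => hpair j k
  linarith

lemma pairs_of_consec (m : ℕ) {X Y : Fin (m+1) → ℝ} (hX : ∀ i, 0 < X i) (hY : ∀ i, 0 < Y i)
    (h : ∀ i : Fin m, X i.succ * Y i.castSucc ≤ X i.castSucc * Y i.succ) :
    ∀ j k : Fin (m+1), j ≤ k → X k * Y j ≤ X j * Y k := by
  have hanti : Antitone (fun i : Fin (m+1) => X i / Y i) := by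
    rw [Fin.antitone_iff_succ_le]
    intro i
    rw [div_le_div_iff₀ (hY _) (hY _)]
    have := h i
    nlinarith [this]
  intro j k hjk
  have h2 := hanti hjk
  rw [div_le_div_iff₀ (hY k) (hY j)] at h2
  linarith

lemma CF_aux (m : ℕ) (l : List ℤ) (hl : ∀ a ∈ l, 0 < a)
    (X Y : Fin (m+1) → ℝ) (hX : ∀ i, 0 < X i) (hY : ∀ i, 0 < Y i)
    (hXY : ∀ j k : Fin (m+1), j ≤ k → X k * Y j ≤ X j * Y k) :
    (∀ i, 0 < (CFmatR m l).mulVec X i) ∧ (∀ i, 0 < (CFmatR m l).mulVec Y i) ∧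
    (Even l.length → ∀ j k : Fin (m+1), j ≤ k →
        (CFmatR m l).mulVec X k * (CFmatR m l).mulVec Y j ≤
          (CFmatR m l).mulVec X j * (CFmatR m l).mulVec Y k) ∧
    (Odd l.length → ∀ j k : Fin (m+1), j ≤ k →
        (CFmatR m l).mulVec Y k * (CFmatR m l).mulVec X j ≤
          (CFmatR m l).mulVec Y j * (CFmatR m l).mulVec X k) := by
  induction l generalizing X Y with
  | nil =>
    simp only [CFmatR, List.map_nil, List.prod_nil, Matrix.one_mulVec, List.length_nil]
    exact ⟨hX, hY, fun _ => hXY, fun h => absurd h (by simp)⟩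
  | cons a t ih =>
    have ha : 0 < a := hl a (List.mem_cons_self)
    have hlt : ∀ b ∈ t, 0 < b := fun b hb => hl b (List.mem_cons_of_mem a hb)
    obtain ⟨hX1, hY1, hEv, hOd⟩ := ih hlt X Y hX hY hXY
    have hprod : ∀ v : Fin (m+1) → ℝ, (CFmatR m (a :: t)).mulVec v
        = (LamR m a).mulVec ((CFmatR m t).mulVec v) := by
      intro v
      rw [Matrix.mulVec_mulVec]
      congr 1
    simp only [hprod, List.length_cons]
    refine ⟨lam_mulVec_pos m ha hX1, lam_mulVec_pos m ha hY1, ?_, ?_⟩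
    · intro h
      rcases Nat.even_or_odd t.length with he | ho
      · exfalso; rw [Nat.even_iff] at h he; omega
      · have hp := hOd ho
        apply pairs_of_consec m (lam_mulVec_pos m ha hX1) (lam_mulVec_pos m ha hY1)
        intro i
        have := lam_step m ha hp i
        nlinarith [this]
    · intro h
      rcases Nat.even_or_odd t.length with he | ho
      · have hp := hEv he
        apply pairs_of_consec m (lam_mulVec_pos m ha hY1) (lam_mulVec_pos m ha hX1)
        intro i
        have := lam_step m ha hp i
        nlinarith [this]
      · exfalso; rw [Nat.odd_iff] at h ho; omega

/-- Let `a₁, …, aₙ` be positive integers, `M = Λ_m(a₁) ⋯ Λ_m(aₙ)`, and let `X, Y` be positive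
vectors with `xᵢ/xᵢ₊₁ ≥ yᵢ/yᵢ₊₁ > 0` for all `1 ≤ i ≤ m`.  With `X' = M X` and `Y' = M Y`,
for all `i`: if `n` is even then `x'ᵢ/x'ᵢ₊₁ ≥ y'ᵢ/y'ᵢ₊₁`, and if `n` is odd then
`x'ᵢ/x'ᵢ₊₁ ≤ y'ᵢ/y'ᵢ₊₁`. -/
theorem CFmat_mulVec_ratio_ineqs (m : ℕ) (l : List ℤ) (hl : ∀ a ∈ l, 0 < a)
    (X Y : Fin (m+1) → ℝ) (hX : ∀ i, 0 < X i) (hY : ∀ i, 0 < Y i)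
    (hXY : ∀ i : Fin m, X i.castSucc / X i.succ ≥ Y i.castSucc / Y i.succ) :
    ∀ i : Fin m,
      (Even l.length →
        ((CFmatR m l).mulVec X) i.castSucc / ((CFmatR m l).mulVec X) i.succ ≥
          ((CFmatR m l).mulVec Y) i.castSucc / ((CFmatR m l).mulVec Y) i.succ) ∧
      (Odd l.length →
        ((CFmatR m l).mulVec X) i.castSucc / ((CFmatR m l).mulVec X) i.succ ≤
          ((CFmatR m l).mulVec Y) i.castSucc / ((CFmatR m l).mulVec Y) i.succ) := by
  have hcs : ∀ i : Fin m, i.castSucc ≤ i.succ := by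
    intro i
    rw [Fin.le_def, Fin.coe_castSucc, Fin.val_succ]
    omega
  have hpairs : ∀ j k : Fin (m+1), j ≤ k → X k * Y j ≤ X j * Y k := by
    apply pairs_of_consec m hX hY
    intro i
    have h := hXY i
    rw [ge_iff_le, div_le_div_iff₀ (hY _) (hX _)] at h
    nlinarith [h]
  obtain ⟨hX1, hY1, hEv, hOd⟩ := CF_aux m l hl X Y hX hY hpairs
  intro i
  constructor
  · intro h
    have := hEv h i.castSucc i.succ (hcs i)
    rw [ge_iff_le, div_le_div_iff₀ (hY1 _) (hX1 _)]
    nlinarith [this]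
  · intro h
    have := hOd h i.castSucc i.succ (hcs i)
    rw [div_le_div_iff₀ (hX1 _) (hY1 _)]
    nlinarith [this]
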